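/- Let G be a finite group, M a monoid functor for G, and H ≤ G. In the M-Burnside ring Ω(H,M), multiplication satisfies [(H/K)_s]·[(H/U)_t] = Σ_{KhU ∈ K\H/U} [(H/(K ∩ ʰU))_{res_{K∩ʰU}^K(s) · res_{K∩ʰU}^{ʰU}(ʰt)}] for all (K,s),(U,t) ∈ S(H,M), where the sum runs over the (K,U)-double cosets in H. -/

import Mathlib

set_option linter.unusedSectionVars false
set_option linter.unusedVariables false

open scoped Classical

namespace LB
noncomputable section

variable {G : Type*} [Group G]

def conjS (g : G) (K : Subgroup G) : Subgroup G :=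
  K.map ((MulAut.conj g).toMonoidHom)

theorem mem_conjS {g x : G} {K : Subgroup G} : x ∈ conjS g K ↔ g⁻¹ * x * g ∈ K := by
  unfold conjS
  rw [Subgroup.mem_map]
  constructor
  · rintro ⟨y, hy, rfl⟩
    have h2 : g⁻¹ * ((MulAut.conj g).toMonoidHom y) * g = y := by
      simp only [MulEquiv.coe_toMonoidHom, MulAut.conj_apply]; group
    rw [h2]; exact hy
  · intro h
    refine ⟨g⁻¹ * x * g, h, ?_⟩
    simp only [MulEquiv.coe_toMonoidHom, MulAut.conj_apply]; group

theorem conjS_mono (g : G) {K K' : Subgroup G} (h : K ≤ K') : conjS g K ≤ conjS g K' :=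
  Subgroup.map_mono h


/-- The Möbius function of a finite partial order. -/
noncomputable def mob {α : Type*} [PartialOrder α] [Finite α] (a b : α) : ℤ :=
  letI : Fintype α := Fintype.ofFinite α
  letI : @DecidableRel α α (· < ·) := Classical.decRel _
  letI : LocallyFiniteOrder α := Fintype.toLocallyFiniteOrder
  IncidenceAlgebra.mu ℤ a b

/-- A monoid functor for `G` (Definition 2.2 of the paper). -/
structure MonoidFunctor (G : Type*) [Group G] where
  M : Subgroup G → Type*
  instM : ∀ K, Monoid (M K)
  con : ∀ (g : G) (K : Subgroup G), M K →* M (conjS g K)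
  res : ∀ {K H : Subgroup G}, K ≤ H → (M H →* M K)
  con_mul : ∀ (g r : G) (K : Subgroup G) (s : M K),
    (⟨conjS g (conjS r K), con g (conjS r K) (con r K s)⟩ : Σ K : Subgroup G, M K)
      = ⟨conjS (g * r) K, con (g * r) K s⟩
  con_id : ∀ (K : Subgroup G) (h : G), h ∈ K → ∀ s : M K,
    (⟨conjS h K, con h K s⟩ : Σ K : Subgroup G, M K) = ⟨K, s⟩
  res_res : ∀ {L K H : Subgroup G} (hLK : L ≤ K) (hKH : K ≤ H) (s : M H),
    res hLK (res hKH s) = res (hLK.trans hKH) s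
  res_self : ∀ (H : Subgroup G) (s : M H), res le_rfl s = s
  con_res : ∀ (g : G) {K H : Subgroup G} (hKH : K ≤ H) (s : M H),
    con g K (res hKH s) = res (conjS_mono g hKH) (con g H s)

attribute [instance] MonoidFunctor.instM

variable (Mf : MonoidFunctor G)

/-- The disjoint union of the monoids `M K`. -/
abbrev Sig (Mf : MonoidFunctor G) := Σ K : Subgroup G, Mf.M K

/-- The conjugation action on pairs `(K, s)`. -/
def dot (g : G) (x : Sig Mf) : Sig Mf := ⟨conjS g x.1, Mf.con g x.1 x.2⟩

theorem dot_one (x : Sig Mf) : dot Mf 1 x = x := Mf.con_id x.1 1 (one_mem _) x.2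

theorem dot_mul (g r : G) (x : Sig Mf) : dot Mf g (dot Mf r x) = dot Mf (g * r) x :=
  Mf.con_mul g r x.1 x.2

/-- `N_H(K,s)`, the stabilizer in `H` of the pair `(K,s)`. -/
def NGpair (H : Subgroup G) (x : Sig Mf) : Subgroup G where
  carrier := {g | g ∈ H ∧ dot Mf g x = x}
  one_mem' := ⟨H.one_mem, dot_one Mf x⟩
  mul_mem' := by
    rintro a b ⟨ha, da⟩ ⟨hb, db⟩
    exact ⟨H.mul_mem ha hb, by rw [← dot_mul, db, da]⟩
  inv_mem' := by
    rintro a ⟨ha, da⟩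
    refine ⟨H.inv_mem ha, ?_⟩
    conv_lhs => rw [← da]
    rw [dot_mul, inv_mul_cancel, dot_one]

/-- A complete set of representatives `R(H,M)` of the `H`-orbits of the set `S(H,M)` of
pairs `(K,s)` with `K ≤ H` and `s ∈ M(K)`. -/
structure Reps (Mf : MonoidFunctor G) (H : Subgroup G) where
  R : Set (Sig Mf)
  subset : ∀ x ∈ R, x.1 ≤ H
  complete : ∀ x : Sig Mf, x.1 ≤ H → ∃! y, y ∈ R ∧ ∃ h ∈ H, dot Mf h x = y

variable {H : Subgroup G}

/-- The coordinate of a tuple indexed by `R(H,M)` at (the orbit of) an arbitrary pair. -/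
def coordAt {A : Type*} [AddCommMonoid A] (R : Reps Mf H) (v : ↥R.R → A) (y : Sig Mf) : A :=
  ∑ᶠ (k : ↥R.R) (_ : ∃ h ∈ H, dot Mf h y = ↑k), v k

/-- The number of cosets `hK ∈ H/K` with `U ≤ ʰK` and `t = res(ʰs)`,
for `x = (K,s)` and `u = (U,t)`. -/
def invCount (H : Subgroup G) (x u : Sig Mf) : ℕ :=
  Nat.card {q : ↥H ⧸ x.1.subgroupOf H //
    ∃ h : ↥H, QuotientGroup.mk h = q ∧
      ∃ hle : u.1 ≤ conjS (h : G) x.1, u.2 = Mf.res hle (Mf.con (h : G) x.1 x.2)}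

/-- The mark morphism `φ_H` in coordinates. -/
def phiM (R : Reps Mf H) (f : ↥R.R → ℤ) : ↥R.R → ℤ :=
  fun u => ∑ᶠ k : ↥R.R, f k * (invCount Mf H k.1 u.1 : ℤ)

/-- `|W_H(K,s)| = |N_H(K,s)/K|`. -/
def WCard (H : Subgroup G) (x : Sig Mf) : ℕ := (x.1.subgroupOf (NGpair Mf H x)).index

/-- The order of a Sylow `p`-subgroup of a group of order `n`; for `p = 0`
(representing `p = ∞`) it is `n` itself. -/
def sylCard (p n : ℕ) : ℕ := if p = 0 then n else p ^ (n.factorization p)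

/-- The multiplicative set `ℤ ∖ (p)` (for `p` prime), resp. the units of `ℤ` (for `p = 0`,
representing `p = ∞`), so that `Localization (locMon p hp)` is `ℤ_(p)`, resp. `ℤ`. -/
def locMon (p : ℕ) (hp : p = 0 ∨ p.Prime) : Submonoid ℤ where
  carrier := {k | if p = 0 then IsUnit k else ¬ (p : ℤ) ∣ k}
  one_mem' := by
    rcases hp with h | h
    · simp [h]
    · simp only [Set.mem_setOf_eq, if_neg h.ne_zero]
      intro hd
      exact h.one_lt.ne' (by exact_mod_cast Int.eq_one_of_dvd_one (by positivity) hd)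
  mul_mem' := by
    intro a b ha hb
    rcases hp with h | h
    · simp only [Set.mem_setOf_eq, if_pos h] at *
      exact ha.mul hb
    · simp only [Set.mem_setOf_eq, if_neg h.ne_zero] at *
      intro hd
      rcases ((Nat.prime_iff_prime_int.mp h).dvd_mul.mp hd) with h1 | h1
      · exact ha h1
      · exact hb h1

/-- `ℤ_(p)` (with `ℤ_(0)` interpreted as `ℤ_(∞) = ℤ`). -/
abbrev Zp (p : ℕ) (hp : p = 0 ∨ p.Prime) := Localization (locMon p hp)


end

universe u v

noncomputable section

variable {G : Type u} [Group G] (Mf : MonoidFunctor G) {H : Subgroup G}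

theorem conjS_le {g : G} {K H : Subgroup G} (hK : K ≤ H) (hg : g ∈ H) : conjS g K ≤ H := by
  intro x hx
  rw [mem_conjS] at hx
  have h2 := H.mul_mem (H.mul_mem hg (hK hx)) (H.inv_mem hg)
  convert h2 using 1
  group

/-- A pair `(J, π)` of a finite `H`-set `J` and a map `π : J → ⊔_{K ≤ H} M(K)`;
the axioms of an element of `T^M_H` are collected in `IsElt` below. -/
structure PreElt (Mf : MonoidFunctor G) (H : Subgroup G) where
  J : Type u
  fin : Finite J
  act : ↥H → J → J
  pi : J → Sig Mf

/-- The stabilizer (as a subset of `G`) of a point of a pre-element. -/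
def stabSet (A : PreElt Mf H) (x : A.J) : Set G :=
  {g | ∃ hg : g ∈ H, A.act ⟨g, hg⟩ x = x}

/-- `(J, π)` is an element of `T^M_H`: the action axioms hold, `π` is `H`-equivariant,
and `π(x) ∈ M(H_x)` where `H_x` is the stabilizer of `x` in `H`. -/
def IsElt (A : PreElt Mf H) : Prop :=
  (∀ x, A.act 1 x = x) ∧
  (∀ (g h : ↥H) (x), A.act (g * h) x = A.act g (A.act h x)) ∧
  (∀ (h : ↥H) (x), A.pi (A.act h x) = dot Mf (h : G) (A.pi x)) ∧
  (∀ x, ((A.pi x).1 : Set G) = stabSet Mf A x)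

/-- `f` is a morphism of elements of `T^M_H`: an `H`-equivariant map with
`π₀(x) = res_{H_x}^{H_{f(x)}}(π(f x))`. -/
def IsMor (A B : PreElt Mf H) (f : A.J → B.J) : Prop :=
  (∀ (h : ↥H) (x), f (A.act h x) = B.act h (f x)) ∧
  (∀ x, ∃ hle : (A.pi x).1 ≤ (B.pi (f x)).1,
    (A.pi x).2 = Mf.res hle ((B.pi (f x)).2))

/-- Two elements of `T^M_H` are isomorphic: there are mutually inverse morphisms
between them. -/
def EltIso (A B : PreElt Mf H) : Prop :=
  ∃ (f : A.J → B.J) (f' : B.J → A.J),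
    (∀ x, f' (f x) = x) ∧ (∀ y, f (f' y) = y) ∧ IsMor Mf A B f ∧ IsMor Mf B A f'

/-- The transitive element `(H/K, π_s)` of `T^M_H`. -/
abbrev transPre [Finite G] (K : Subgroup G) (hK : K ≤ H) (s : Mf.M K) : PreElt Mf H where
  J := ↥H ⧸ K.subgroupOf H
  fin := inferInstance
  act h q := h • q
  pi q := dot Mf ((Quotient.out q : ↥H) : G) ⟨K, s⟩

/-- The product element `(J₁ × J₂, π₁·π₂)` of two elements of `T^M_H`, where
`(π₁·π₂)(x₁,x₂) = res(π₁(x₁))·res(π₂(x₂)) ∈ M(H_{x₁} ∩ H_{x₂})`. -/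
abbrev prodPre (A B : PreElt Mf H) : PreElt Mf H where
  J := A.J × B.J
  fin := by have := A.fin; have := B.fin; exact inferInstance
  act h x := (A.act h x.1, B.act h x.2)
  pi x := ⟨(A.pi x.1).1 ⊓ (B.pi x.2).1,
    Mf.res inf_le_left ((A.pi x.1).2) * Mf.res inf_le_right ((B.pi x.2).2)⟩

/-- A finite disjoint union of pre-elements. -/
abbrev unionPre (ι : Type u) (hι : Finite ι) (f : ι → PreElt Mf H) : PreElt Mf H where
  J := Σ i, (f i).J
  fin := by
    letI := hι
    haveI : ∀ i, Finite (f i).J := fun i => (f i).fin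
    exact inferInstance
  act h x := ⟨x.1, (f x.1).act h x.2⟩
  pi x := (f x.1).pi x.2

/-! The `H`-orbits of `H/K × H/U` are indexed by the double cosets `KhU`, the orbit of
`(K, hU)` having stabilizer `K ∩ ʰU` (Mackey). Hence `y (K ∩ ʰU) ↦ (yK, yhU)` is an
`H`-equivariant bijection from the disjoint union onto the product, and it respects the maps
`π` because conjugation in `M` commutes with restriction and multiplication. -/

section DoubleCosetDecomposition

variable {Γ : Type*} [Group Γ] {A B : Subgroup Γ}
  {L : DoubleCoset.Quotient (A : Set Γ) B → Subgroup Γ}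

def sigmaQuotientToProd (hL : ∀ q x, x ∈ L q ↔ x ∈ A ∧ q.out⁻¹ * x * q.out ∈ B) :
    (Σ q, Γ ⧸ L q) → (Γ ⧸ A) × (Γ ⧸ B) := fun x =>
  (Subgroup.quotientMapOfLE (fun m hm => ((hL x.1 m).mp hm).1) x.2,
    Quotient.map' (· * x.1.out) (fun a b hab => by
      rw [QuotientGroup.leftRel_apply] at hab ⊢
      simpa [mul_assoc] using ((hL x.1 _).mp hab).2) x.2)

variable (hL : ∀ q x, x ∈ L q ↔ x ∈ A ∧ q.out⁻¹ * x * q.out ∈ B)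

theorem sigmaQuotientToProd_mk (q : DoubleCoset.Quotient (A : Set Γ) B) (y : Γ) :
    sigmaQuotientToProd hL ⟨q, (y : Γ ⧸ L q)⟩ = ((y : Γ ⧸ A), (y * q.out : Γ ⧸ B)) :=
  rfl

theorem sigmaQuotientToProd_smul (g : Γ) (x : Σ q, Γ ⧸ L q) :
    sigmaQuotientToProd hL ⟨x.1, g • x.2⟩ = g • sigmaQuotientToProd hL x := by
  obtain ⟨q, y⟩ := x
  induction y using QuotientGroup.induction_on
  simp only [MulAction.Quotient.smul_mk, sigmaQuotientToProd_mk, Prod.smul_mk, smul_eq_mul,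
    mul_assoc]

theorem sigmaQuotientToProd_injective : Function.Injective (sigmaQuotientToProd hL) := by
  rintro ⟨q, y⟩ ⟨q', y'⟩ hyy
  induction y using QuotientGroup.induction_on with | H y => ?_
  induction y' using QuotientGroup.induction_on with | H y' => ?_
  simp only [sigmaQuotientToProd_mk, Prod.mk.injEq, QuotientGroup.eq] at hyy
  obtain ⟨hA, hB⟩ := hyy
  obtain rfl : q = q' := by
    rw [← DoubleCoset.out_eq' A B q, ← DoubleCoset.out_eq' A B q', DoubleCoset.eq]
    exact ⟨y'⁻¹ * y, by simpa using A.inv_mem hA, _, hB, by group⟩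
  have : y⁻¹ * y' ∈ L q := (hL q _).mpr ⟨hA, by simpa [mul_assoc] using hB⟩
  simp [QuotientGroup.eq.mpr this]

theorem sigmaQuotientToProd_surjective : Function.Surjective (sigmaQuotientToProd hL) := by
  rintro ⟨a, b⟩
  induction a using QuotientGroup.induction_on with | H a => ?_
  induction b using QuotientGroup.induction_on with | H b => ?_
  obtain ⟨κ, υ, hκ, hυ, hout⟩ := DoubleCoset.mk_out_eq_mul A B (a⁻¹ * b)
  refine ⟨⟨DoubleCoset.mk A B (a⁻¹ * b), ((a * κ⁻¹ : Γ) : Γ ⧸ _)⟩, ?_⟩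
  rw [sigmaQuotientToProd_mk, hout, Prod.mk.injEq, QuotientGroup.eq, QuotientGroup.eq]
  exact ⟨by simpa using hκ, by simpa [mul_assoc] using B.inv_mem hυ⟩

def sigmaQuotientEquivProd : (Σ q, Γ ⧸ L q) ≃ (Γ ⧸ A) × (Γ ⧸ B) :=
  Equiv.ofBijective (sigmaQuotientToProd hL)
    ⟨sigmaQuotientToProd_injective hL, sigmaQuotientToProd_surjective hL⟩

end DoubleCosetDecomposition

theorem conjS_inf (g : G) (P Q : Subgroup G) : conjS g (P ⊓ Q) = conjS g P ⊓ conjS g Q := by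
  ext x
  simp only [Subgroup.mem_inf, mem_conjS]

def pairProd (x y : Sig Mf) : Sig Mf :=
  ⟨x.1 ⊓ y.1, Mf.res inf_le_left x.2 * Mf.res inf_le_right y.2⟩

theorem dot_pairProd (g : G) (x y : Sig Mf) :
    dot Mf g (pairProd Mf x y) = pairProd Mf (dot Mf g x) (dot Mf g y) := by
  obtain ⟨P, a⟩ := x
  obtain ⟨Q, b⟩ := y
  -- `conjS g (P ⊓ Q)` and `conjS g P ⊓ conjS g Q` are equal but not definitionally so
  have transport : ∀ {R : Subgroup G} (_ : R = conjS g P ⊓ conjS g Q)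
      (h₁ : R ≤ conjS g P) (h₂ : R ≤ conjS g Q),
      (⟨R, Mf.res h₁ (Mf.con g P a) * Mf.res h₂ (Mf.con g Q b)⟩ : Sig Mf) =
        pairProd Mf ⟨conjS g P, Mf.con g P a⟩ ⟨conjS g Q, Mf.con g Q b⟩ := by
    rintro _ rfl _ _
    rfl
  unfold pairProd dot
  dsimp only
  rw [map_mul, Mf.con_res, Mf.con_res]
  exact transport (conjS_inf g P Q) _ _

theorem dot_mul_of_mem {K : Subgroup G} {k : G} (hk : k ∈ K) (g : G) (s : Mf.M K) :
    dot Mf (g * k) ⟨K, s⟩ = dot Mf g ⟨K, s⟩ := by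
  rw [← dot_mul]
  exact congrArg (dot Mf g) (Mf.con_id K k hk s)

theorem transPre_pi_mk [Finite G] {K : Subgroup G} (hK : K ≤ H) (s : Mf.M K) (a : ↥H) :
    (transPre Mf K hK s).pi a = dot Mf (a : G) ⟨K, s⟩ := by
  obtain ⟨k, hk⟩ := QuotientGroup.mk_out_eq_mul (K.subgroupOf H) a
  simp only [hk, Subgroup.coe_mul]
  exact dot_mul_of_mem Mf (Subgroup.mem_subgroupOf.mp k.2) _ s

theorem exists_res_eq_of_eq {x y : Sig Mf} (h : x = y) :
    ∃ hle : x.1 ≤ y.1, x.2 = Mf.res hle y.2 := by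
  subst h
  exact ⟨le_rfl, (Mf.res_self x.1 x.2).symm⟩

theorem EltIso.of_equiv {A B : PreElt Mf H} (e : B.J ≃ A.J)
    (he_act : ∀ (g : ↥H) (x : B.J), e (B.act g x) = A.act g (e x))
    (he_pi : ∀ x : B.J, B.pi x = A.pi (e x)) : EltIso Mf A B := by
  refine ⟨e.symm, e, e.apply_symm_apply, e.symm_apply_apply,
    ⟨fun g x => ?_, fun x => exists_res_eq_of_eq Mf ?_⟩,
    ⟨he_act, fun x => exists_res_eq_of_eq Mf (he_pi x)⟩⟩
  · rw [e.symm_apply_eq, he_act, e.apply_symm_apply]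
  · rw [he_pi, e.apply_symm_apply]

/-- In the `M`-Burnside ring `Ω(H,M)`, multiplication (induced by the
cartesian product of elements of `T^M_H`) satisfies
`[(H/K)_s]·[(H/U)_t] = Σ_{KhU ∈ K\H/U} [(H/(K ∩ ʰU))_{res(s)·res(ʰt)}]`:
the product element `(H/K)_s × (H/U)_t` is isomorphic (as an element of `T^M_H`) to the
disjoint union, over the `(K,U)`-double cosets `KhU` of `H`, of the transitive elements
`(H/(K ∩ ʰU))_{res_{K∩ʰU}^K(s) · res_{K∩ʰU}^{ʰU}(ʰt)}`. -/
theorem prod_trans_iso_union [Finite G]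
    (K U : Subgroup G) (hK : K ≤ H) (hU : U ≤ H) (s : Mf.M K) (t : Mf.M U) :
    EltIso Mf (prodPre Mf (transPre Mf K hK s) (transPre Mf U hU t))
      (unionPre Mf
        (DoubleCoset.Quotient (↑(K.subgroupOf H) : Set ↥H) (↑(U.subgroupOf H) : Set ↥H))
        (by unfold DoubleCoset.Quotient; infer_instance)
        (fun q =>
          transPre Mf (K ⊓ conjS ((Quotient.out q : ↥H) : G) U)
            (inf_le_left.trans hK)
            (Mf.res inf_le_left s *
              Mf.res inf_le_right
                (Mf.con ((Quotient.out q : ↥H) : G) U t)))) := by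
  have hL : ∀ (q : DoubleCoset.Quotient (↑(K.subgroupOf H) : Set ↥H) ↑(U.subgroupOf H)) x,
      x ∈ (K ⊓ conjS ((Quotient.out q : ↥H) : G) U).subgroupOf H ↔
        x ∈ K.subgroupOf H ∧ (Quotient.out q)⁻¹ * x * Quotient.out q ∈ U.subgroupOf H := by
    intro q x
    simp only [Subgroup.mem_subgroupOf, Subgroup.mem_inf, mem_conjS, Subgroup.coe_mul,
      Subgroup.coe_inv]
  refine EltIso.of_equiv Mf (sigmaQuotientEquivProd hL) (sigmaQuotientToProd_smul hL) ?_
  rintro ⟨q, y⟩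
  induction y using QuotientGroup.induction_on with | H y => ?_
  refine (transPre_pi_mk Mf (inf_le_left.trans hK) _ y).trans ?_
  change _ = pairProd Mf ((transPre Mf K hK s).pi (y : ↥H ⧸ K.subgroupOf H))
    ((transPre Mf U hU t).pi ((y * Quotient.out q : ↥H) : ↥H ⧸ U.subgroupOf H))
  rw [transPre_pi_mk, transPre_pi_mk, Subgroup.coe_mul, ← dot_mul, ← dot_pairProd]
  rfl

end
end LB
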